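/- Let (G,τ) be a topological abelian group, φ: (G,τ) → (G,τ) a continuous endomorphism, and H a dense φ-invariant subgroup of G. Then ent*_τ(φ) = ent*_{τ|_H}(φ|_H). -/

import Mathlib

open Filter Topology ENNReal

variable {G : Type*} [AddCommGroup G]

/-- `B_n(φ,N) = N ∩ φ⁻¹(N) ∩ … ∩ φ^{-(n-1)}(N)`. -/
noncomputable def Bsub (φ : AddMonoid.End G) (N : AddSubgroup G) (n : ℕ) : AddSubgroup G :=
  ⨅ i ∈ Finset.range n, N.comap (φ ^ i : AddMonoid.End G)

/-- `H*(φ,N) = lim_n log|G/B_n(φ,N)|/n`. -/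
noncomputable def Hstar (φ : AddMonoid.End G) (N : AddSubgroup G) : ℝ :=
  limUnder atTop fun n : ℕ => Real.log ((Bsub φ N n).index) / n

/-- The topological adjoint entropy: sup of `H*(φ,N)` over `τ`-open finite-index subgroups. -/
noncomputable def entStar (t : TopologicalSpace G) (φ : AddMonoid.End G) : ℝ≥0∞ :=
  ⨆ (N : AddSubgroup G) (_ : @IsOpen G t ↑N ∧ N.FiniteIndex), ENNReal.ofReal (Hstar φ N)

/-!
Restricting to a dense subgroup `H` gives a bijection `N ↦ N ∩ H` between the open subgroups
of `G` and those of `H`, with inverse `M ↦ closure M`. It preserves indices: the cosets of an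
open subgroup `N` are open, so the dense `H` meets each of them and `N + H = G`. As `B_n(φ,N)`
is open and `B_n(φ|_H, N ∩ H) = B_n(φ,N) ∩ H`, it preserves `H*` too, so both entropies are
suprema of the same family of numbers.
-/

namespace AddSubgroup

variable {A : Type*} [AddGroup A] [TopologicalSpace A] {N H : AddSubgroup A}

theorem isOpen_addSubgroupOf (hN : IsOpen (N : Set A)) :
    IsOpen ((N.addSubgroupOf H : AddSubgroup H) : Set H) :=
  hN.preimage continuous_subtype_val

variable [IsTopologicalAddGroup A]

theorem sup_eq_top_of_isOpen_of_dense (hN : IsOpen (N : Set A)) (hH : Dense (H : Set A)) :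
    N ⊔ H = ⊤ := by
  refine eq_top_iff.2 fun g _ => ?_
  obtain ⟨h, hhH, hhN⟩ := hH.exists_mem_open (hN.preimage (continuous_sub_right g))
    ⟨g, by simp [N.zero_mem]⟩
  rw [← sub_add_cancel g h, ← neg_sub]
  exact add_mem (mem_sup_left (N.neg_mem hhN)) (mem_sup_right hhH)

theorem index_addSubgroupOf_of_isOpen_of_dense [N.Normal] (hN : IsOpen (N : Set A))
    (hH : Dense (H : Set A)) : (N.addSubgroupOf H).index = N.index := by
  rw [← relIndex, ← relIndex_sup_left, sup_eq_top_of_isOpen_of_dense hN hH, relIndex_top_right]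

theorem isOpen_topologicalClosure_map_subtype (hH : Dense (H : Set A)) {M : AddSubgroup H}
    (hM : IsOpen (M : Set H)) : IsOpen ((M.map H.subtype).topologicalClosure : Set A) := by
  obtain ⟨U, hU, hUM⟩ := isOpen_induced_iff.1 hM
  have hUH : (U ∩ H : Set A) = M.map H.subtype := by
    rw [coe_map, coe_subtype, ← hUM, Set.image_preimage_eq_inter_range,
      Subtype.range_coe_subtype]
    rfl
  have h0U : (0 : A) ∈ U := by
    have := M.zero_mem
    rwa [← SetLike.mem_coe, ← hUM] at this
  refine isOpen_of_mem_nhds _ (g := 0) (mem_of_superset (hU.mem_nhds h0U) ?_)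
  rw [topologicalClosure_coe, ← hUH]
  exact hH.open_subset_closure_inter hU

theorem topologicalClosure_map_subtype_addSubgroupOf {M : AddSubgroup H}
    (hM : IsClosed (M : Set H)) : (M.map H.subtype).topologicalClosure.addSubgroupOf H = M := by
  ext x
  rw [mem_addSubgroupOf, ← SetLike.mem_coe, topologicalClosure_coe, coe_map, coe_subtype,
    ← closure_subtype, hM.closure_eq, SetLike.mem_coe]

end AddSubgroup

theorem coe_Bsub (φ : AddMonoid.End G) (N : AddSubgroup G) (n : ℕ) :
    (Bsub φ N n : Set G) = ⋂ i ∈ Finset.range n, (⇑φ)^[i] ⁻¹' N := by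
  simp only [Bsub, AddSubgroup.coe_iInf]
  rfl

theorem isOpen_Bsub [TopologicalSpace G] {φ : AddMonoid.End G} (hφ : Continuous φ)
    {N : AddSubgroup G} (hN : IsOpen (N : Set G)) (n : ℕ) : IsOpen (Bsub φ N n : Set G) := by
  rw [coe_Bsub]
  exact isOpen_biInter_finset fun i _ => hN.preimage (hφ.iterate i)

section Restriction

variable {φ : AddMonoid.End G} {H : AddSubgroup G} {ψ : AddMonoid.End H}

theorem Bsub_addSubgroupOf (hψ : ∀ x : H, (ψ x : G) = φ x) (N : AddSubgroup G) (n : ℕ) :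
    Bsub ψ (N.addSubgroupOf H) n = (Bsub φ N n).addSubgroupOf H := by
  have hiter (i : ℕ) (x : H) : ((⇑ψ)^[i] x : G) = (⇑φ)^[i] x :=
    Function.Semiconj.iterate_right (f := Subtype.val) hψ i x
  ext x
  simp only [← SetLike.mem_coe, coe_Bsub, AddSubgroup.coe_addSubgroupOf, Set.mem_preimage,
    Set.mem_iInter, AddSubgroup.coe_subtype, hiter]

theorem Hstar_addSubgroupOf [TopologicalSpace G] [IsTopologicalAddGroup G]
    (hφ : Continuous φ) (hH : Dense (H : Set G)) (hψ : ∀ x : H, (ψ x : G) = φ x)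
    {N : AddSubgroup G} (hN : IsOpen (N : Set G)) : Hstar ψ (N.addSubgroupOf H) = Hstar φ N := by
  simp only [Hstar, Bsub_addSubgroupOf hψ,
    AddSubgroup.index_addSubgroupOf_of_isOpen_of_dense (isOpen_Bsub hφ hN _) hH]

end Restriction

theorem ofReal_Hstar_le_entStar (t : TopologicalSpace G) (φ : AddMonoid.End G)
    {N : AddSubgroup G} (hN : IsOpen[t] (N : Set G)) (hNf : N.FiniteIndex) :
    ENNReal.ofReal (Hstar φ N) ≤ entStar t φ :=
  le_iSup₂ (f := fun (N : AddSubgroup G) (_ : IsOpen[t] (N : Set G) ∧ N.FiniteIndex) =>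
    ENNReal.ofReal (Hstar φ N)) N ⟨hN, hNf⟩

theorem stmt9 [TopologicalSpace G] [IsTopologicalAddGroup G]
    (φ : AddMonoid.End G) (hφ : Continuous φ)
    (H : AddSubgroup G) (hd : Dense (H : Set G)) (hinv : ∀ x ∈ H, φ x ∈ H) :
    entStar ‹TopologicalSpace G› φ
      = entStar (inferInstance : TopologicalSpace H)
          (((φ : G →+ G).comp H.subtype).codRestrict H (fun x => hinv x x.2)) := by
  set ψ : AddMonoid.End H := ((φ : G →+ G).comp H.subtype).codRestrict H fun x => hinv x x.2
  have hψ : ∀ x : H, (ψ x : G) = φ x := fun _ => rfl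
  refine le_antisymm (iSup₂_le fun N ⟨hN, hNf⟩ => ?_) (iSup₂_le fun M ⟨hM, hMf⟩ => ?_)
  · rw [← Hstar_addSubgroupOf hφ hd hψ hN]
    refine ofReal_Hstar_le_entStar _ _ (AddSubgroup.isOpen_addSubgroupOf hN) ⟨?_⟩
    rw [AddSubgroup.index_addSubgroupOf_of_isOpen_of_dense hN hd]
    exact hNf.index_ne_zero
  · set N := (M.map H.subtype).topologicalClosure
    have hN : IsOpen (N : Set G) := AddSubgroup.isOpen_topologicalClosure_map_subtype hd hM
    have hNM : N.addSubgroupOf H = M :=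
      AddSubgroup.topologicalClosure_map_subtype_addSubgroupOf (M.isClosed_of_isOpen hM)
    rw [← hNM, Hstar_addSubgroupOf hφ hd hψ hN]
    refine ofReal_Hstar_le_entStar _ _ hN ⟨?_⟩
    rw [← AddSubgroup.index_addSubgroupOf_of_isOpen_of_dense hN hd, hNM]
    exact hMf.index_ne_zero
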